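/- Let φ : X → Y be a continuous, open, surjective map between Hausdorff topological spaces. If there is a positive integer k such that every fiber φ⁻¹(y) has exactly k elements, then φ is a covering map. -/

import Mathlib

/-- A continuous, open, surjective map between Hausdorff spaces all of whose fibers
have the same finite positive cardinality `k` is a covering map. -/
theorem stmt_2 {X Y : Type*} [TopologicalSpace X] [TopologicalSpace Y]
    [T2Space X] [T2Space Y] (φ : X → Y)
    (hcont : Continuous φ) (hopen : IsOpenMap φ) (hsurj : Function.Surjective φ)
    (k : ℕ) (hk : 0 < k) (hfib : ∀ y : Y, Nat.card (φ ⁻¹' {y}) = k) :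
    IsCoveringMap φ := by
  classical
  have hfinfib : ∀ v : Y, Finite (φ ⁻¹' {v} : Set X) := fun v =>
    Nat.finite_of_card_ne_zero (by rw [hfib v]; omega)
  have hnefib : ∀ v : Y, Nonempty (φ ⁻¹' {v} : Set X) := fun v =>
    (Nat.card_pos_iff.mp (by rw [hfib v]; exact hk)).1
  intro y
  haveI := hfinfib y
  haveI := hnefib y
  have hfinS : (φ ⁻¹' {y}).Finite := Set.toFinite _
  -- pairwise disjoint open neighborhoods of the fiber points
  obtain ⟨U, hU, hUd⟩ := hfinS.t2_separation
  -- the evenly covered neighborhood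
  set V : Set Y := ⋂ i : (φ ⁻¹' {y} : Set X), φ '' U i.1 with hV
  have hVopen : IsOpen V := isOpen_iInter_of_finite fun i => hopen _ (hU i.1).2
  have hyV : y ∈ V := Set.mem_iInter.mpr fun i => ⟨i.1, (hU i.1).1, i.2⟩
  -- key: for v ∈ V, the fiber over v meets each U i in exactly one point and is covered
  have key : ∀ v ∈ V, (∀ x, φ x = v → ∃ i : (φ ⁻¹' {y} : Set X), x ∈ U i.1) ∧
      (∀ i : (φ ⁻¹' {y} : Set X), ∀ x x', x ∈ U i.1 → φ x = v → x' ∈ U i.1 → φ x' = v →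
        x = x') := by
    intro v hv
    have hA : ∀ i : (φ ⁻¹' {y} : Set X), ∃ x, x ∈ U i.1 ∧ φ x = v := by
      intro i
      obtain ⟨x, hx1, hx2⟩ := Set.mem_iInter.mp hv i
      exact ⟨x, hx1, hx2⟩
    choose c hc1 hc2 using hA
    have hidx : ∀ (i j : (φ ⁻¹' {y} : Set X)) (x : X), x ∈ U i.1 → x ∈ U j.1 → i = j := by
      intro i j x hxi hxj
      by_contra hne
      exact Set.disjoint_left.mp (hUd i.2 j.2 (fun h => hne (Subtype.ext h))) hxi hxj
    have hcinj : Function.Injective (fun i : (φ ⁻¹' {y} : Set X) =>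
        (⟨c i, hc2 i⟩ : (φ ⁻¹' {v} : Set X))) := by
      intro i j hij
      have : c i = c j := congrArg Subtype.val hij
      exact hidx i j (c i) (hc1 i) (this ▸ hc1 j)
    haveI := hfinfib v
    have hcbij := (Nat.bijective_iff_injective_and_card _).mpr
      ⟨hcinj, by rw [hfib y, hfib v]⟩
    constructor
    · intro x hx
      obtain ⟨i, hi⟩ := hcbij.2 ⟨x, hx⟩
      have hci : c i = x := congrArg Subtype.val hi
      exact ⟨i, hci ▸ hc1 i⟩
    · intro i x x' hxU hxv hx'U hx'v
      obtain ⟨j, hj⟩ := hcbij.2 ⟨x, hxv⟩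
      obtain ⟨j', hj'⟩ := hcbij.2 ⟨x', hx'v⟩
      have hx : c j = x := congrArg Subtype.val hj
      have hx' : c j' = x' := congrArg Subtype.val hj'
      have : j = i := hidx j i x (hx ▸ hc1 j) hxU
      have h2 : j' = i := hidx j' i x' (hx' ▸ hc1 j') hx'U
      rw [← hx, ← hx', this, h2]
  have hidx' : ∀ (i j : (φ ⁻¹' {y} : Set X)) (x : X), x ∈ U i.1 → x ∈ U j.1 → i = j := by
    intro i j x hxi hxj
    by_contra hne
    exact Set.disjoint_left.mp (hUd i.2 j.2 (fun h => hne (Subtype.ext h))) hxi hxj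
  -- the index function
  let idx : X → (φ ⁻¹' {y} : Set X) := fun x =>
    if h : ∃ i : (φ ⁻¹' {y} : Set X), x ∈ U i.1 then h.choose else Classical.arbitrary _
  have hidx : ∀ (x : X) (i : (φ ⁻¹' {y} : Set X)), x ∈ U i.1 → idx x = i := by
    intro x i hxi
    have h : ∃ j : (φ ⁻¹' {y} : Set X), x ∈ U j.1 := ⟨i, hxi⟩
    simp only [idx, dif_pos h]
    exact hidx' h.choose i x h.choose_spec hxi
  -- the local sections
  let sec : (φ ⁻¹' {y} : Set X) → Y → X := fun i v =>
    if h : ∃ x, x ∈ U i.1 ∧ φ x = v then h.choose else i.1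
  have hsec1 : ∀ (i : (φ ⁻¹' {y} : Set X)) (v : Y), v ∈ V →
      sec i v ∈ U i.1 ∧ φ (sec i v) = v := by
    intro i v hv
    obtain ⟨x, hx1, hx2⟩ := Set.mem_iInter.mp hv i
    have h : ∃ x, x ∈ U i.1 ∧ φ x = v := ⟨x, hx1, hx2⟩
    simp only [sec, dif_pos h]
    exact h.choose_spec
  have hsec2 : ∀ (i : (φ ⁻¹' {y} : Set X)) (x : X), φ x ∈ V → x ∈ U i.1 →
      sec i (φ x) = x := by
    intro i x hxV hxU
    obtain ⟨h1, h2⟩ := hsec1 i (φ x) hxV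
    exact (key (φ x) hxV).2 i _ x h1 h2 hxU rfl
  -- continuity of the sections
  have hsecCont : ∀ (i : (φ ⁻¹' {y} : Set X)) (v : Y), v ∈ V → ContinuousAt (sec i) v := by
    intro i v hv
    rw [ContinuousAt, Filter.tendsto_def]
    intro O hO
    obtain ⟨O', hO'sub, hO'open, hmem⟩ := mem_nhds_iff.mp hO
    refine Filter.mem_of_superset (IsOpen.mem_nhds
      ((hopen _ (hO'open.inter (hU i.1).2)).inter hVopen)
      ⟨⟨sec i v, ⟨hmem, (hsec1 i v hv).1⟩, (hsec1 i v hv).2⟩, hv⟩) ?_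
    rintro v' ⟨⟨x, ⟨hxO', hxU⟩, hφx⟩, hv'V⟩
    have : sec i v' = x :=
      (key v' hv'V).2 i _ x (hsec1 i v' hv'V).1 (hsec1 i v' hv'V).2 hxU hφx
    exact Set.mem_preimage.mpr (hO'sub (this ▸ hxO'))
  haveI : DiscreteTopology (φ ⁻¹' {y} : Set X) := inferInstance
  refine IsEvenlyCovered.of_trivialization (t :=
     { toFun := fun x => (φ x, idx x)
       invFun := fun p => sec p.2 p.1
       source := φ ⁻¹' V
       target := V ×ˢ (Set.univ : Set (φ ⁻¹' {y} : Set X))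
       map_source' := fun x hx => ⟨hx, trivial⟩
       map_target' := fun p hp => by
         simp only [Set.mem_preimage]
         rw [(hsec1 p.2 p.1 hp.1).2]
         exact hp.1
       left_inv' := by
         intro x hx
         obtain ⟨i, hi⟩ := (key (φ x) hx).1 x rfl
         show sec (idx x) (φ x) = x
         rw [hidx x i hi]
         exact hsec2 i x hx hi
       right_inv' := by
         intro p hp
         have h1 := hsec1 p.2 p.1 hp.1
         exact Prod.ext h1.2 (hidx _ p.2 h1.1)
       open_source := hVopen.preimage hcont
       open_target := hVopen.prod isOpen_univ
       continuousOn_toFun := by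
         intro x hx
         apply ContinuousAt.continuousWithinAt
         show ContinuousAt (fun x' => ((φ x', idx x') : Y × (φ ⁻¹' {y} : Set X))) x
         obtain ⟨i, hi⟩ := (key (φ x) hx).1 x rfl
         have heq : (fun x' => ((φ x', i) : Y × (φ ⁻¹' {y} : Set X))) =ᶠ[nhds x]
             fun x' => (φ x', idx x') := by
           filter_upwards [(hU i.1).2.mem_nhds hi] with x' hx'
           rw [hidx x' i hx']
         exact (hcont.continuousAt.prodMk continuousAt_const).congr heq
       continuousOn_invFun := by
         rintro p hp
         apply ContinuousAt.continuousWithinAt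
         have h2 : ContinuousAt (fun q : Y × (φ ⁻¹' {y} : Set X) => sec p.2 q.1) p :=
           (hsecCont p.2 p.1 hp.1).comp continuousAt_fst
         apply h2.congr
         show (fun q : Y × (φ ⁻¹' {y} : Set X) => sec p.2 q.1) =ᶠ[nhds p]
           fun q : Y × (φ ⁻¹' {y} : Set X) => sec q.2 q.1
         have hsnd : {q : Y × (φ ⁻¹' {y} : Set X) | q.2 = p.2} ∈ nhds p := by
           have : ({p.2} : Set (φ ⁻¹' {y} : Set X)) ∈ nhds p.2 := by
             rw [nhds_discrete]; exact Filter.mem_pure.mpr rfl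
           exact continuousAt_snd.preimage_mem_nhds this
         filter_upwards [hsnd] with q hq
         rw [show q.2 = p.2 from hq]
       baseSet := V
       open_baseSet := hVopen
       source_eq := rfl
       target_eq := rfl
       proj_toFun := fun x _ => rfl }) hyV
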